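/- arXiv:2412.08914 — 6 statements merged into one kernel-verified Lean document; each statement's English description precedes it below -/
import Mathlib

section
/- Let α > −1 and μ > 0, and define u : ℝ² → ℝ by u(x) = −2·log(1 + μ·‖x‖^{2(1+α)}). Then for every R > 0, ∫_{B_R(0)} ‖∇u(x)‖² dx = 16π(1+α)·( log(1 + μ·R^{2(1+α)}) − μ·R^{2(1+α)}/(1 + μ·R^{2(1+α)}) ), where ∇u denotes the Euclidean gradient and B_R(0) ⊂ ℝ² the open ball of radius R centered at the origin. -/
open Real MeasureTheory

/-- The radial profile of the squared gradient norm of the bubble. -/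
noncomputable def ggBubble (α μ : ℝ) : ℝ → ℝ := fun r =>
  16*(1+α)^2*μ^2 * (((r^2:ℝ))^α)^2 * r^2 / (1 + μ * ((r^2:ℝ))^(1+α))^2

lemma ggBubble_eq (α μ : ℝ) {y : ℝ} (hy : 0 < y) :
    y * ggBubble α μ y = 16*(1+α)^2*μ^2 * y ^ (4*α+3) / (1 + μ * y ^ (2*(1+α)))^2 := by
  have e1 : ((y^2:ℝ))^α = y^(2*α) := by
    rw [← Real.rpow_two, ← Real.rpow_mul hy.le]
  have e2 : ((y^2:ℝ))^(1+α) = y^(2*(1+α)) := by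
    rw [← Real.rpow_two, ← Real.rpow_mul hy.le]
  have e3 : (y ^ (2*α)) ^ 2 * y ^ 2 * y = y ^ (4*α+3) := by
    calc (y ^ (2*α)) ^ 2 * y ^ 2 * y
        = y^(2*α) * y^(2*α) * y^((2:ℕ):ℝ) * y^(1:ℝ) := by
          rw [Real.rpow_natCast, Real.rpow_one]; ring
      _ = y ^ (2*α+(2*α)+((2:ℕ):ℝ)+1) := by
          rw [Real.rpow_add hy, Real.rpow_add hy, Real.rpow_add hy]
      _ = y ^ (4*α+3) := by norm_num; ring_nf
  rw [ggBubble, e1, e2, mul_div_assoc']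
  congr 1
  rw [← e3]; ring

lemma F_hasDeriv_bubble (α μ : ℝ) (hμ : 0 < μ) {y : ℝ} (hy : 0 < y) :
    HasDerivAt (fun r : ℝ => 8*(1+α) * (Real.log (1 + μ * r ^ (2*(1+α)))
        - μ * r ^ (2*(1+α)) / (1 + μ * r ^ (2*(1+α))))) (y * ggBubble α μ y) y := by
  set c : ℝ := 2*(1+α) with hc
  have hyc : (0:ℝ) ≤ y ^ c := Real.rpow_nonneg hy.le c
  have hD : (0:ℝ) < 1 + μ * y ^ c := by positivity
  have h1 : HasDerivAt (fun r : ℝ => r ^ c) (c * y ^ (c-1)) y :=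
    Real.hasDerivAt_rpow_const (Or.inl hy.ne')
  have ht : HasDerivAt (fun r : ℝ => μ * r ^ c) (μ * (c * y ^ (c-1))) y := h1.const_mul μ
  have htD : HasDerivAt (fun r : ℝ => 1 + μ * r ^ c) (μ * (c * y ^ (c-1))) y := ht.const_add 1
  have hlog : HasDerivAt (fun r : ℝ => Real.log (1 + μ * r ^ c))
      (μ * (c * y ^ (c-1)) / (1 + μ * y ^ c)) y := htD.log hD.ne'
  have hdiv : HasDerivAt (fun r : ℝ => μ * r ^ c / (1 + μ * r ^ c))
      ((μ * (c * y ^ (c-1)) * (1 + μ * y ^ c) - μ * y ^ c * (μ * (c * y ^ (c-1))))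
        / (1 + μ * y ^ c)^2) y := ht.div htD hD.ne'
  have hF := (hlog.sub hdiv).const_mul (8*(1+α))
  refine hF.congr_deriv (Eq.symm ?_)
  rw [ggBubble_eq α μ hy]
  have e4 : y ^ (c-1) * y ^ c = y ^ (4*α+3) := by
    rw [← Real.rpow_add hy]; congr 1; rw [hc]; ring
  have hr : 8*(1+α) * (μ * (c * y ^ (c-1)) / (1 + μ * y ^ c)
      - (μ * (c * y ^ (c-1)) * (1 + μ * y ^ c) - μ * y ^ c * (μ * (c * y ^ (c-1))))
        / (1 + μ * y ^ c)^2)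
      = 8*(1+α) * (μ * (c * y ^ (c-1))) * (μ * y ^ c) / (1 + μ * y ^ c)^2 := by
    field_simp
    ring
  rw [hr]
  rw [show 8*(1+α) * (μ * (c * y ^ (c-1))) * (μ * y ^ c)
      = 8*(1+α)*μ^2*c*(y^(c-1) * y^c) by ring, e4, hc]
  congr 1
  ring

lemma ggBubble_integrable (α μ : ℝ) (hα : -1 < α) (hμ : 0 < μ) {R : ℝ} (hR : 0 < R) :
    IntervalIntegrable (fun y => y * ggBubble α μ y) volume 0 R := by
  have hB : IntervalIntegrable (fun y : ℝ => 16*(1+α)^2*μ^2 * y ^ (4*α+3)) volume 0 R :=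
    (intervalIntegral.intervalIntegrable_rpow' (by linarith)).const_mul _
  apply hB.mono_fun
  · apply Measurable.aestronglyMeasurable
    apply measurable_id.mul
    unfold ggBubble
    fun_prop
  · rw [Set.uIoc_of_le hR.le]
    filter_upwards [ae_restrict_mem measurableSet_Ioc] with y hy
    have hy0 : 0 < y := hy.1
    rw [ggBubble_eq α μ hy0]
    have hyp : (0:ℝ) ≤ 16*(1+α)^2*μ^2 * y ^ (4*α+3) := by positivity
    have hyc : (0:ℝ) ≤ μ * y ^ (2*(1+α)) := by positivity
    have hD : (1:ℝ) ≤ (1 + μ * y ^ (2*(1+α)))^2 := by nlinarith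
    rw [Real.norm_of_nonneg (by positivity), Real.norm_of_nonneg hyp]
    exact div_le_self hyp hD

lemma key_interval_bubble (α μ : ℝ) (hα : -1 < α) (hμ : 0 < μ) {R : ℝ} (hR : 0 < R) :
    ∫ y in (0:ℝ)..R, y * ggBubble α μ y
      = 8*(1+α) * (Real.log (1 + μ * R ^ (2*(1+α)))
          - μ * R ^ (2*(1+α)) / (1 + μ * R ^ (2*(1+α)))) := by
  have hc : (0:ℝ) < 2*(1+α) := by linarith
  have hcont : ContinuousOn (fun r : ℝ => 8*(1+α) * (Real.log (1 + μ * r ^ (2*(1+α)))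
      - μ * r ^ (2*(1+α)) / (1 + μ * r ^ (2*(1+α))))) (Set.Icc 0 R) := by
    intro r hr
    have h0 : ContinuousAt (fun r : ℝ => r ^ (2*(1+α))) r :=
      Real.continuousAt_rpow_const r _ (Or.inr hc.le)
    have hD : (0:ℝ) < 1 + μ * r ^ (2*(1+α)) := by
      have := Real.rpow_nonneg hr.1 (2*(1+α)); positivity
    have hA : ContinuousAt (fun r : ℝ => 1 + μ * r ^ (2*(1+α))) r :=
      continuousAt_const.add (continuousAt_const.mul h0)
    exact (continuousAt_const.mul ((hA.log hD.ne').sub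
      ((continuousAt_const.mul h0).div hA hD.ne'))).continuousWithinAt
  have := intervalIntegral.integral_eq_sub_of_hasDerivAt_of_le hR.le hcont
    (fun y hy => F_hasDeriv_bubble α μ hμ hy.1) (ggBubble_integrable α μ hα hμ hR)
  rw [this, Real.zero_rpow hc.ne']
  norm_num

lemma grad_bubble (α μ : ℝ) (hμ : 0 < μ) (x : EuclideanSpace ℝ (Fin 2)) (hx : x ≠ 0) :
    HasGradientAt (fun y : EuclideanSpace ℝ (Fin 2) => -2 * Real.log (1 + μ * ‖y‖ ^ (2 * (1 + α))))
      ((2 * (-2 * (μ * ((1 + α) * ((‖x‖ ^ 2 : ℝ)) ^ α)) / (1 + μ * ((‖x‖ ^ 2 : ℝ)) ^ (1 + α)))) • x) x := by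
  have hnx : (0:ℝ) < ‖x‖ := norm_pos_iff.mpr hx
  set s : ℝ := ‖x‖ ^ 2 with hs_def
  have hs : 0 < s := by positivity
  have hden : (0:ℝ) < 1 + μ * s ^ (1 + α) := by positivity
  have h1 : HasDerivAt (fun r : ℝ => r ^ (1 + α)) ((1 + α) * s ^ α) s := by
    have := Real.hasDerivAt_rpow_const (x := s) (p := 1 + α) (Or.inl hs.ne')
    simpa using this
  have h2 : HasDerivAt (fun r : ℝ => 1 + μ * r ^ (1 + α)) (μ * ((1 + α) * s ^ α)) s :=
    (h1.const_mul μ).const_add 1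
  have h3 : HasDerivAt (fun r : ℝ => -2 * Real.log (1 + μ * r ^ (1 + α)))
      (-2 * (μ * ((1 + α) * s ^ α)) / (1 + μ * s ^ (1 + α))) s := by
    have h := (h2.log hden.ne').const_mul (-2 : ℝ)
    refine h.congr_deriv ?_
    ring
  have hq : HasFDerivAt (fun y : EuclideanSpace ℝ (Fin 2) => ‖y‖ ^ 2)
      (2 • (innerSL ℝ x)) x := (hasStrictFDerivAt_norm_sq x).hasFDerivAt
  have hcomp := h3.comp_hasFDerivAt x hq
  have hfun : (fun y : EuclideanSpace ℝ (Fin 2) => -2 * Real.log (1 + μ * ‖y‖ ^ (2 * (1 + α))))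
      = fun y => -2 * Real.log (1 + μ * ((‖y‖ ^ 2 : ℝ)) ^ (1 + α)) := by
    funext y
    rw [Real.rpow_mul (norm_nonneg y), Real.rpow_two]
  rw [hfun]
  have hgr : HasGradientAt (fun y : EuclideanSpace ℝ (Fin 2) =>
      -2 * Real.log (1 + μ * ((‖y‖ ^ 2 : ℝ)) ^ (1 + α))) _ x := hasFDerivAt_iff_hasGradientAt.mp hcomp
  convert hgr using 1
  apply (InnerProductSpace.toDual ℝ (EuclideanSpace ℝ (Fin 2))).injective
  rw [LinearIsometryEquiv.apply_symm_apply]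
  ext y
  simp [InnerProductSpace.toDual_apply_apply, real_inner_smul_left, two_smul]
  ring

/-- Exact Dirichlet energy of the bubble `u(x) = −2 log(1 + μ‖x‖^{2(1+α)})`
on the ball `B_R(0) ⊂ ℝ²`. -/
theorem stmt_6 (α μ : ℝ) (hα : -1 < α) (hμ : 0 < μ)
    (u : EuclideanSpace ℝ (Fin 2) → ℝ)
    (hu : ∀ x : EuclideanSpace ℝ (Fin 2),
      u x = -2 * Real.log (1 + μ * ‖x‖ ^ (2 * (1 + α)))) :
    ∀ R : ℝ, 0 < R →
      ∫ x in Metric.ball (0 : EuclideanSpace ℝ (Fin 2)) R, ‖gradient u x‖ ^ 2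
        = 16 * π * (1 + α) *
          (Real.log (1 + μ * R ^ (2 * (1 + α)))
            - μ * R ^ (2 * (1 + α)) / (1 + μ * R ^ (2 * (1 + α)))) := by
  have hu' : u = fun x => -2 * Real.log (1 + μ * ‖x‖ ^ (2 * (1 + α))) := funext hu
  subst hu'
  intro R hR
  -- pointwise formula
  have hgrad : ∀ x : EuclideanSpace ℝ (Fin 2), x ≠ 0 →
      ‖gradient (fun x : EuclideanSpace ℝ (Fin 2) =>
        -2 * Real.log (1 + μ * ‖x‖ ^ (2 * (1 + α)))) x‖ ^ 2 = ggBubble α μ ‖x‖ := by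
    intro x hx
    rw [(grad_bubble α μ hμ x hx).gradient, norm_smul, Real.norm_eq_abs, mul_pow, sq_abs,
      ggBubble]
    have hnx : (0:ℝ) < ‖x‖ := norm_pos_iff.mpr hx
    have hD : (0:ℝ) < 1 + μ * ((‖x‖^2 : ℝ)) ^ (1 + α) := by positivity
    field_simp
    ring
  -- a.e. rewrite on the ball
  have hzero : ∀ᵐ x : EuclideanSpace ℝ (Fin 2) ∂volume, x ≠ 0 := by
    refine ae_iff.mpr ?_
    simpa using measure_singleton (0 : EuclideanSpace ℝ (Fin 2))
  have step1 : ∫ x in Metric.ball (0 : EuclideanSpace ℝ (Fin 2)) R,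
      ‖gradient (fun x : EuclideanSpace ℝ (Fin 2) =>
        -2 * Real.log (1 + μ * ‖x‖ ^ (2 * (1 + α)))) x‖ ^ 2
      = ∫ x in Metric.ball (0 : EuclideanSpace ℝ (Fin 2)) R, ggBubble α μ ‖x‖ := by
    apply setIntegral_congr_ae measurableSet_ball
    filter_upwards [hzero] with x hx _
    exact hgrad x hx
  set G : ℝ → ℝ := fun r => if r < R then ggBubble α μ r else 0 with hG
  have step2 : ∫ x in Metric.ball (0 : EuclideanSpace ℝ (Fin 2)) R, ggBubble α μ ‖x‖
      = ∫ x : EuclideanSpace ℝ (Fin 2), G ‖x‖ := by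
    rw [← integral_indicator measurableSet_ball]
    congr 1
    funext x
    by_cases h : ‖x‖ < R <;>
      simp [hG, Set.indicator_apply, mem_ball_zero_iff, h]
  have step3 : ∫ x : EuclideanSpace ℝ (Fin 2), G ‖x‖
      = 2 * (π * ∫ y in Set.Ioi (0:ℝ), y * G y) := by
    rw [integral_fun_norm_addHaar (volume : Measure (EuclideanSpace ℝ (Fin 2))) G]
    have hrank : Module.finrank ℝ (EuclideanSpace ℝ (Fin 2)) = 2 := by
      simp [finrank_euclideanSpace]
    have hvol : (volume (Metric.ball (0 : EuclideanSpace ℝ (Fin 2)) 1)).toReal = π := by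
      rw [EuclideanSpace.volume_ball]
      have : Real.Gamma (1+1) = 1 := by
        rw [show (1+1 : ℝ) = 2 by norm_num, Real.Gamma_two]
      simp [this, Real.sq_sqrt Real.pi_pos.le, ENNReal.toReal_ofReal Real.pi_pos.le]
    rw [hrank, measureReal_def, hvol]
    norm_num
  have step4 : ∫ y in Set.Ioi (0:ℝ), y * G y = ∫ y in (0:ℝ)..R, y * ggBubble α μ y := by
    rw [setIntegral_congr_fun measurableSet_Ioi
      (g := fun y => Set.indicator (Set.Ioo 0 R) (fun y => y * ggBubble α μ y) y) ?_]
    · rw [integral_indicator measurableSet_Ioo, Measure.restrict_restrict measurableSet_Ioo,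
        Set.inter_eq_left.mpr (fun y hy => hy.1),
        intervalIntegral.integral_of_le hR.le, integral_Ioc_eq_integral_Ioo]
    · intro y hy
      by_cases h : y < R <;>
        simp [hG, Set.indicator_apply, Set.mem_Ioo, h, Set.mem_Ioi.mp hy]
  rw [step1, step2, step3, step4, key_interval_bubble α μ hα hμ hR]
  ring
end

section
/- Let α > −1 and μ > 0, and define u : ℝ² → ℝ by u(x) = −2·log(1 + μ·‖x‖^{2(1+α)}). Then lim_{R → ∞} [ (1/4)·∫_{B_R(0)} ‖∇u(x)‖² dx − 4π(1+α)·log(1 + μ·R^{2(1+α)}) ] = −4π(1+α). -/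
set_option maxHeartbeats 1000000

open Real MeasureTheory Filter intervalIntegral

local notation "E2" => EuclideanSpace ℝ (Fin 2)

private lemma grad_formula' (β μ : ℝ) (hβ : 0 < β) (hμ : 0 < μ) (u : E2 → ℝ)
    (hu : ∀ x : E2, u x = -2 * Real.log (1 + μ * ‖x‖ ^ (2 * β)))
    (x : E2) (hx : x ≠ 0) :
    HasGradientAt u ((-4 * μ * β * ‖x‖ ^ (2 * β - 2) / (1 + μ * ‖x‖ ^ (2 * β))) • x) x := by
  have hr : (0:ℝ) < ‖x‖ := norm_pos_iff.mpr hx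
  set t : ℝ := ‖x‖ ^ (2:ℕ) with ht_def
  have ht : 0 < t := by positivity
  have hpow : ∀ c : ℝ, t ^ c = ‖x‖ ^ (2 * c) := by
    intro c
    rw [ht_def, ← Real.rpow_natCast ‖x‖ 2, ← Real.rpow_mul (norm_nonneg x)]
    norm_num
  have hD : (0:ℝ) < 1 + μ * t ^ β := by positivity
  have h1 : HasDerivAt (fun s : ℝ => s ^ β) (β * t ^ (β - 1)) t :=
    Real.hasDerivAt_rpow_const (Or.inl ht.ne')
  have h2 : HasDerivAt (fun s : ℝ => 1 + μ * s ^ β) (μ * (β * t ^ (β - 1))) t :=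
    (h1.const_mul μ).const_add 1
  have h3 : HasDerivAt (fun s : ℝ => Real.log (1 + μ * s ^ β))
      (μ * (β * t ^ (β - 1)) / (1 + μ * t ^ β)) t := h2.log hD.ne'
  have hf : HasDerivAt (fun s : ℝ => -2 * Real.log (1 + μ * s ^ β))
      (-2 * (μ * (β * t ^ (β - 1)) / (1 + μ * t ^ β))) t := h3.const_mul (-2)
  have hq : HasFDerivAt (fun y : E2 => ‖y‖ ^ (2:ℕ)) (2 • (innerSL ℝ x)) x :=
    (hasStrictFDerivAt_norm_sq x).hasFDerivAt
  have hcomp := hf.comp_hasFDerivAt x hq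
  have hueq : u = (fun s : ℝ => -2 * Real.log (1 + μ * s ^ β)) ∘ (fun y : E2 => ‖y‖ ^ (2:ℕ)) := by
    funext y
    have : ((‖y‖ ^ (2:ℕ) : ℝ)) ^ β = ‖y‖ ^ (2 * β) := by
      rw [← Real.rpow_natCast ‖y‖ 2, ← Real.rpow_mul (norm_nonneg y)]
      norm_num
    simp [hu y, Function.comp, this]
  rw [← hueq] at hcomp
  have hL : (InnerProductSpace.toDual ℝ E2)
      ((-2 * (μ * (β * t ^ (β - 1)) / (1 + μ * t ^ β)) * 2) • x)
      = (-2 * (μ * (β * t ^ (β - 1)) / (1 + μ * t ^ β))) • (2 • (innerSL ℝ x)) := by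
    ext y
    simp only [InnerProductSpace.toDual_apply_apply, ContinuousLinearMap.coe_smul',
      Pi.smul_apply, ContinuousLinearMap.smul_apply, innerSL_apply_apply]
    rw [real_inner_smul_left]
    simp only [smul_eq_mul]
    ring
  have : HasGradientAt u
      ((-2 * (μ * (β * t ^ (β - 1)) / (1 + μ * t ^ β)) * 2) • x) x := by
    rw [hasGradientAt_iff_hasFDerivAt, hL]
    exact hcomp
  convert this using 2
  rw [hpow (β - 1), hpow β]
  have h2b : ‖x‖ ^ (2 * (β - 1)) = ‖x‖ ^ (2 * β - 2) := by ring_nf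
  rw [h2b]
  ring

private lemma vol_ball_one' : (volume (Metric.ball (0 : E2) 1)).toReal = π := by
  rw [EuclideanSpace.volume_ball]
  simp [Real.Gamma_two, Real.sq_sqrt Real.pi_nonneg, Fintype.card_fin]
  norm_num [Real.sq_sqrt Real.pi_nonneg, Real.pi_nonneg]

private lemma ftc_part' (β μ R : ℝ) (hβ : 0 < β) (hμ : 0 < μ) (hR : 0 < R) :
    ∫ y in (0:ℝ)..R, y * (16 * μ ^ 2 * β ^ 2 * y ^ (4 * β - 2) / (1 + μ * y ^ (2 * β)) ^ 2)
      = 8 * β * (Real.log (1 + μ * R ^ (2 * β)) + (1 + μ * R ^ (2 * β))⁻¹) - 8 * β := by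
  set G : ℝ → ℝ := fun r => 8 * β * (Real.log (1 + μ * r ^ (2 * β)) + (1 + μ * r ^ (2 * β))⁻¹)
    with hG
  have hDpos : ∀ r : ℝ, 0 ≤ r → 0 < 1 + μ * r ^ (2 * β) := by
    intro r hr
    have : 0 ≤ μ * r ^ (2 * β) := mul_nonneg hμ.le (Real.rpow_nonneg hr _)
    linarith
  have hcont : ContinuousOn G (Set.Icc 0 R) := by
    have hc : Continuous fun r : ℝ => 1 + μ * r ^ (2 * β) := by
      have : Continuous fun r : ℝ => r ^ (2 * β) :=
        Real.continuous_rpow_const (by positivity)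
      continuity
    apply ContinuousOn.mul continuousOn_const
    apply ContinuousOn.add
    · exact ContinuousOn.log hc.continuousOn fun r hr => (hDpos r hr.1).ne'
    · exact ContinuousOn.inv₀ hc.continuousOn fun r hr => (hDpos r hr.1).ne'
  have hderiv : ∀ y ∈ Set.Ioo (0:ℝ) R, HasDerivAt G
      (y * (16 * μ ^ 2 * β ^ 2 * y ^ (4 * β - 2) / (1 + μ * y ^ (2 * β)) ^ 2)) y := by
    intro y hy
    have hy0 : 0 < y := hy.1
    have hD := hDpos y hy0.le
    have h1 : HasDerivAt (fun r : ℝ => r ^ (2 * β)) (2 * β * y ^ (2 * β - 1)) y :=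
      Real.hasDerivAt_rpow_const (Or.inl hy0.ne')
    have h2 : HasDerivAt (fun r : ℝ => 1 + μ * r ^ (2 * β))
        (μ * (2 * β * y ^ (2 * β - 1))) y := (h1.const_mul μ).const_add 1
    have h3 : HasDerivAt (fun r : ℝ => Real.log (1 + μ * r ^ (2 * β)))
        (μ * (2 * β * y ^ (2 * β - 1)) / (1 + μ * y ^ (2 * β))) y := h2.log hD.ne'
    have h4 : HasDerivAt (fun r : ℝ => (1 + μ * r ^ (2 * β))⁻¹)
        (-(μ * (2 * β * y ^ (2 * β - 1))) / (1 + μ * y ^ (2 * β)) ^ 2) y :=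
      h2.inv hD.ne'
    have h5 := ((h3.add h4).const_mul (8 * β))
    refine HasDerivAt.congr_deriv h5 ?_
    have e3 : y * y ^ (4 * β - 2) = y ^ (2 * β - 1) * y ^ (2 * β) := by
      rw [← Real.rpow_add hy0]
      nth_rewrite 1 [← Real.rpow_one y]
      rw [← Real.rpow_add hy0]
      ring_nf
    rw [show y * (16 * μ ^ 2 * β ^ 2 * y ^ (4 * β - 2) / (1 + μ * y ^ (2 * β)) ^ 2)
        = 16 * μ ^ 2 * β ^ 2 * (y * y ^ (4 * β - 2)) / (1 + μ * y ^ (2 * β)) ^ 2 by ring, e3]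
    field_simp
    ring
  have hint : IntervalIntegrable
      (fun y => y * (16 * μ ^ 2 * β ^ 2 * y ^ (4 * β - 2) / (1 + μ * y ^ (2 * β)) ^ 2))
      volume 0 R := by
    apply IntervalIntegrable.mono_fun
      ((intervalIntegrable_rpow' (by linarith : (-1:ℝ) < 4 * β - 1)).const_mul
        (16 * μ ^ 2 * β ^ 2))
    · apply Measurable.aestronglyMeasurable
      fun_prop
    · rw [Set.uIoc_of_le hR.le]
      filter_upwards [ae_restrict_mem measurableSet_Ioc] with y hy
      have hy0 : 0 < y := hy.1
      have hD := hDpos y hy0.le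
      have e3 : y * y ^ (4 * β - 2) = y ^ (4 * β - 1) := by
        nth_rewrite 1 [← Real.rpow_one y]
        rw [← Real.rpow_add hy0]
        ring_nf
      have hnum : (0:ℝ) ≤ 16 * μ ^ 2 * β ^ 2 * y ^ (4 * β - 1) := by positivity
      have hφ : y * (16 * μ ^ 2 * β ^ 2 * y ^ (4 * β - 2) / (1 + μ * y ^ (2 * β)) ^ 2)
          = 16 * μ ^ 2 * β ^ 2 * y ^ (4 * β - 1) / (1 + μ * y ^ (2 * β)) ^ 2 := by
        rw [← e3]; ring
      rw [Real.norm_eq_abs, Real.norm_eq_abs, hφ, abs_of_nonneg (by positivity),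
        abs_of_nonneg hnum]
      have hD1 : (1:ℝ) ≤ (1 + μ * y ^ (2 * β)) ^ 2 := by
        have : (0:ℝ) ≤ μ * y ^ (2 * β) := mul_nonneg hμ.le (Real.rpow_nonneg hy0.le _)
        nlinarith
      exact div_le_self hnum hD1
  have key := integral_eq_sub_of_hasDerivAt_of_le hR.le hcont hderiv hint
  rw [key, hG]
  have h0 : (0:ℝ) ^ (2 * β) = 0 := Real.zero_rpow (by positivity)
  simp [h0]

private lemma polar' (g : ℝ → ℝ) (R : ℝ) :
    ∫ x in Metric.ball (0 : E2) R, g ‖x‖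
      = 2 * (volume (Metric.ball (0 : E2) 1)).toReal * ∫ y in Set.Ioo (0:ℝ) R, y * g y := by
  have h1 : ∫ x in Metric.ball (0 : E2) R, g ‖x‖
      = ∫ x : E2, Set.indicator (Set.Iio R) g ‖x‖ := by
    rw [← MeasureTheory.integral_indicator measurableSet_ball]
    congr 1
    funext x
    by_cases hx : ‖x‖ < R <;>
      simp [Set.indicator, hx, Metric.mem_ball, dist_zero_right]
  rw [h1, MeasureTheory.integral_fun_norm_addHaar volume (Set.indicator (Set.Iio R) g)]
  simp only [finrank_euclideanSpace_fin, smul_eq_mul, nsmul_eq_mul, Nat.cast_ofNat, pow_one]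
  have h2 : ∫ y in Set.Ioi (0:ℝ), y ^ (2 - 1) • Set.indicator (Set.Iio R) g y
      = ∫ y in Set.Ioo (0:ℝ) R, y * g y := by
    have : ∀ y : ℝ, y ^ (2 - 1) • Set.indicator (Set.Iio R) g y
        = Set.indicator (Set.Iio R) (fun y => y * g y) y := by
      intro y
      by_cases hy : y ∈ Set.Iio R <;> simp [Set.indicator, hy]
    simp_rw [this]
    rw [MeasureTheory.setIntegral_indicator measurableSet_Iio, Set.Ioi_inter_Iio]
  simp only [smul_eq_mul] at h2
  rw [h2]
  rw [measureReal_def]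
  ring

/-- Asymptotics of the bubbling-region energy: for the bubble
`u(x) = −2 log(1 + μ‖x‖^{2(1+α)})`,
`(1/4)∫_{B_R}‖∇u‖² − 4π(1+α) log(1 + μR^{2(1+α)}) → −4π(1+α)` as `R → ∞`. -/
theorem stmt_7 (α μ : ℝ) (hα : -1 < α) (hμ : 0 < μ)
    (u : EuclideanSpace ℝ (Fin 2) → ℝ)
    (hu : ∀ x : EuclideanSpace ℝ (Fin 2),
      u x = -2 * Real.log (1 + μ * ‖x‖ ^ (2 * (1 + α)))) :
    Tendsto (fun R : ℝ =>
        (1 / 4) * (∫ x in Metric.ball (0 : EuclideanSpace ℝ (Fin 2)) R,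
            ‖gradient u x‖ ^ 2)
          - 4 * π * (1 + α) * Real.log (1 + μ * R ^ (2 * (1 + α))))
      atTop (nhds (-(4 * π * (1 + α)))) := by
  set β := 1 + α with hβdef
  have hβ : 0 < β := by simp [hβdef]; linarith
  set g : ℝ → ℝ := fun r => 16 * μ ^ 2 * β ^ 2 * r ^ (4 * β - 2) / (1 + μ * r ^ (2 * β)) ^ 2
    with hgdef
  have key : ∀ R : ℝ, 0 < R →
      (1 / 4) * (∫ x in Metric.ball (0 : E2) R, ‖gradient u x‖ ^ 2)
        - 4 * π * β * Real.log (1 + μ * R ^ (2 * β))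
      = 4 * π * β * (1 + μ * R ^ (2 * β))⁻¹ - 4 * π * β := by
    intro R hR
    have hae : ∀ᵐ x : E2 ∂volume, x ≠ 0 := by
      rw [ae_iff]
      simpa using measure_singleton (0 : E2)
    have hball : ∫ x in Metric.ball (0 : E2) R, ‖gradient u x‖ ^ 2
        = ∫ x in Metric.ball (0 : E2) R, g ‖x‖ := by
      apply setIntegral_congr_ae measurableSet_ball
      filter_upwards [hae] with x hx _
      have hr : (0:ℝ) < ‖x‖ := norm_pos_iff.mpr hx
      have hgrad := grad_formula' β μ hβ hμ u hu x hx
      rw [hgrad.gradient, norm_smul, mul_pow, Real.norm_eq_abs, sq_abs, hgdef]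
      have hD : (0:ℝ) < 1 + μ * ‖x‖ ^ (2 * β) := by
        have : 0 ≤ μ * ‖x‖ ^ (2 * β) := mul_nonneg hμ.le (Real.rpow_nonneg hr.le _)
        linarith
      have e : (‖x‖ ^ (2 * β - 2)) ^ (2:ℕ) * ‖x‖ ^ (2:ℕ) = ‖x‖ ^ (4 * β - 2) := by
        rw [← Real.rpow_natCast (‖x‖ ^ (2 * β - 2)) 2, ← Real.rpow_mul (norm_nonneg x),
          ← Real.rpow_natCast ‖x‖ 2, ← Real.rpow_add hr]
        congr 1
        push_cast
        ring
      rw [div_pow]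
      rw [show (-4 * μ * β * ‖x‖ ^ (2 * β - 2)) ^ 2 / (1 + μ * ‖x‖ ^ (2 * β)) ^ 2 * ‖x‖ ^ 2
          = 16 * μ ^ 2 * β ^ 2 * ((‖x‖ ^ (2 * β - 2)) ^ (2:ℕ) * ‖x‖ ^ (2:ℕ))
            / (1 + μ * ‖x‖ ^ (2 * β)) ^ 2 by ring, e]
    have hIoo : ∫ y in Set.Ioo (0:ℝ) R, y * g y
        = ∫ y in (0:ℝ)..R, y * g y := by
      rw [intervalIntegral.integral_of_le hR.le, MeasureTheory.integral_Ioc_eq_integral_Ioo]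
    have hftc := ftc_part' β μ R hβ hμ hR
    rw [hball, polar' g R, vol_ball_one', hIoo, hgdef]
    simp only at hftc ⊢
    rw [hftc]
    ring
  have hinf : Tendsto (fun R : ℝ => 1 + μ * R ^ (2 * β)) atTop atTop := by
    apply tendsto_atTop_add_const_left
    exact (tendsto_rpow_atTop (by positivity)).const_mul_atTop hμ
  have hlim : Tendsto (fun R : ℝ => 4 * π * β * (1 + μ * R ^ (2 * β))⁻¹ - 4 * π * β)
      atTop (nhds (-(4 * π * β))) := by
    have h0 : Tendsto (fun R : ℝ => (1 + μ * R ^ (2 * β))⁻¹) atTop (nhds 0) :=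
      hinf.inv_tendsto_atTop
    have h1 := (h0.const_mul (4 * π * β)).sub_const (4 * π * β)
    simpa using h1
  exact Tendsto.congr'
    (by filter_upwards [eventually_gt_atTop 0] with R hR; exact (key R hR).symm) hlim
end

section
/- Let α > −1, ε > 0 and R > 0. Then ∫_{B_R(0)} ‖x‖^{2α}·ε·(‖x‖^{2(1+α)} + ε)^{−2} dx = (π/(1+α))·R^{2(1+α)}/(R^{2(1+α)} + ε), where B_R(0) ⊂ ℝ² is the open ball of radius R centered at the origin and the integral is with respect to Lebesgue measure on ℝ². -/
open Real MeasureTheory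

lemma aux_ball_vol : (volume (Metric.ball (0 : EuclideanSpace ℝ (Fin 2)) 1)).toReal = π := by
  rw [EuclideanSpace.volume_ball]
  have h2 : Real.Gamma ((Fintype.card (Fin 2) : ℝ) / 2 + 1) = 1 := by
    norm_num
  rw [h2]
  simp [Real.sq_sqrt Real.pi_nonneg, Real.pi_nonneg]

lemma aux_radial (α ε R : ℝ) (hα : -1 < α) (hε : 0 < ε) (hR : 0 < R) :
    ∫ y in Set.Ioo (0:ℝ) R, ε * y ^ (2 * α + 1) * (y ^ (2 * (1 + α)) + ε) ^ (-2 : ℝ)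
      = ε / (2 * (1 + α)) * (ε⁻¹ - (R ^ (2 * (1 + α)) + ε)⁻¹) := by
  have hp : 0 < 1 + α := by linarith
  set p : ℝ := 2 * (1 + α) with hpdef
  have hp0 : 0 < p := by positivity
  set G : ℝ → ℝ := fun r => -(ε / p) * (r ^ p + ε)⁻¹ with hG
  have hcontpow : Continuous fun r : ℝ => r ^ p := by
    refine continuous_iff_continuousAt.mpr fun x => Real.continuousAt_rpow_const x p (Or.inr hp0.le)
  have hden : ∀ r ∈ Set.Icc (0:ℝ) R, r ^ p + ε ≠ 0 := by
    intro r hr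
    have : 0 ≤ r ^ p := Real.rpow_nonneg hr.1 p
    positivity
  have hGcont : ContinuousOn G (Set.Icc 0 R) := by
    exact (continuousOn_const.mul (((hcontpow.continuousOn).add continuousOn_const).inv₀ hden))
  have hderiv : ∀ r ∈ Set.Ioo (0:ℝ) R,
      HasDerivAt G (ε * r ^ (2 * α + 1) * (r ^ p + ε) ^ (-2 : ℝ)) r := by
    intro r hr
    have hr0 : 0 < r := hr.1
    have h1 : HasDerivAt (fun r : ℝ => r ^ p + ε) (p * r ^ (p - 1)) r := by
      simpa using (Real.hasDerivAt_rpow_const (p := p) (Or.inl hr0.ne')).add_const ε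
    have hne : r ^ p + ε ≠ 0 := by
      have : 0 ≤ r ^ p := Real.rpow_nonneg hr0.le p
      positivity
    have h2 := (h1.inv hne).const_mul (-(ε / p))
    refine h2.congr_deriv ?_
    have hpow : r ^ (2 * α + 1) = r ^ (p - 1) := by
      congr 1; rw [hpdef]; ring
    have hr2 : (r ^ p + ε) ^ (-2 : ℝ) = ((r ^ p + ε) ^ 2)⁻¹ := by
      have hpos : 0 < r ^ p + ε := lt_of_le_of_ne (by positivity) (Ne.symm hne)
      rw [Real.rpow_neg hpos.le, Real.rpow_two]
    rw [hpow, hr2]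
    field_simp
  have hint : IntervalIntegrable
      (fun r : ℝ => ε * r ^ (2 * α + 1) * (r ^ p + ε) ^ (-2 : ℝ)) volume 0 R := by
    have h1 : IntervalIntegrable (fun r : ℝ => ε * r ^ (2 * α + 1)) volume 0 R :=
      (intervalIntegral.intervalIntegrable_rpow' (by linarith)).const_mul ε
    refine h1.mul_continuousOn ?_
    have huIcc : Set.uIcc (0:ℝ) R = Set.Icc 0 R := Set.uIcc_of_le hR.le
    rw [huIcc]
    exact ((hcontpow.continuousOn).add continuousOn_const).rpow_const
      (fun r hr => Or.inl (hden r hr))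
  have hFTC := intervalIntegral.integral_eq_sub_of_hasDeriv_right_of_le hR.le hGcont
    (fun r hr => (hderiv r hr).hasDerivWithinAt) hint
  rw [← MeasureTheory.integral_Ioc_eq_integral_Ioo, ← intervalIntegral.integral_of_le hR.le,
    hFTC]
  have h0 : (0:ℝ) ^ p = 0 := Real.zero_rpow hp0.ne'
  simp only [hG, h0, zero_add]
  ring

/-- Exact weighted mass of the test function `Φ_ε` on a ball:
`∫_{B_R(0)} ‖x‖^{2α} ε (‖x‖^{2(1+α)} + ε)^{−2} dx
  = (π/(1+α)) R^{2(1+α)}/(R^{2(1+α)} + ε)`. -/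
theorem stmt_8 (α ε R : ℝ) (hα : -1 < α) (hε : 0 < ε) (hR : 0 < R) :
    ∫ x in Metric.ball (0 : EuclideanSpace ℝ (Fin 2)) R,
        ‖x‖ ^ (2 * α) * ε * (‖x‖ ^ (2 * (1 + α)) + ε) ^ (-2 : ℝ)
      = (π / (1 + α)) * R ^ (2 * (1 + α)) / (R ^ (2 * (1 + α)) + ε) := by
  have hp : 0 < 1 + α := by linarith
  set F : ℝ → ℝ := fun r => r ^ (2 * α) * ε * (r ^ (2 * (1 + α)) + ε) ^ (-2 : ℝ) with hF
  have step1 : ∫ x in Metric.ball (0 : EuclideanSpace ℝ (Fin 2)) R,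
      ‖x‖ ^ (2 * α) * ε * (‖x‖ ^ (2 * (1 + α)) + ε) ^ (-2 : ℝ)
      = ∫ x : EuclideanSpace ℝ (Fin 2), Set.indicator (Set.Iio R) F ‖x‖ := by
    rw [← MeasureTheory.integral_indicator measurableSet_ball]
    congr 1
    ext x
    by_cases h : ‖x‖ < R <;>
      simp [Set.indicator, mem_ball_zero_iff, h, hF]
  rw [step1, MeasureTheory.integral_fun_norm_addHaar volume (Set.indicator (Set.Iio R) F)]
  have hdim : Module.finrank ℝ (EuclideanSpace ℝ (Fin 2)) = 2 := by
    simp [finrank_euclideanSpace]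
  rw [hdim]
  have step2 : ∫ y in Set.Ioi (0:ℝ), y ^ (2 - 1) • Set.indicator (Set.Iio R) F y
      = ∫ y in Set.Ioo (0:ℝ) R, ε * y ^ (2 * α + 1) * (y ^ (2 * (1 + α)) + ε) ^ (-2 : ℝ) := by
    have : ∀ y : ℝ, y ^ (2 - 1) • Set.indicator (Set.Iio R) F y
        = Set.indicator (Set.Iio R) (fun y => y * F y) y := by
      intro y
      by_cases h : y ∈ Set.Iio R <;> simp [Set.indicator, h, smul_eq_mul]
    simp_rw [this]
    rw [MeasureTheory.setIntegral_indicator measurableSet_Iio]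
    rw [show Set.Ioi (0:ℝ) ∩ Set.Iio R = Set.Ioo 0 R from Set.Ioi_inter_Iio]
    refine MeasureTheory.setIntegral_congr_fun measurableSet_Ioo fun y hy => ?_
    have hy0 : 0 < y := hy.1
    have : y ^ (2 * α + 1) = y ^ (2 * α) * y := by
      rw [Real.rpow_add hy0, Real.rpow_one]
    rw [hF]
    simp only []
    rw [this]
    ring
  rw [step2, aux_radial α ε R hα hε hR, measureReal_def, aux_ball_vol]
  have hU : 0 < R ^ (2 * (1 + α)) := Real.rpow_pos_of_pos hR _
  have hUe : R ^ (2 * (1 + α)) + ε ≠ 0 := by positivity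
  simp only [smul_eq_mul, nsmul_eq_mul, Nat.cast_ofNat]
  field_simp
  ring
end

section
/- Let 0 < s < t and a, b ∈ ℝ. Let χ : ℝ² → ℝ be continuously differentiable on an open set containing the closed annulus {x ∈ ℝ² : s ≤ ‖x‖ ≤ t}, with χ(x) = a whenever ‖x‖ = s and χ(x) = b whenever ‖x‖ = t. Then ∫_{ {x : s < ‖x‖ < t} } ‖∇χ(x)‖² dx ≥ 2π·(a−b)² / log(t/s). -/
open Real MeasureTheory intervalIntegral

lemma my_cs (s t : ℝ) (hs : 0 < s) (hst : s < t) (D : ℝ → ℝ)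
    (hD : ContinuousOn D (Set.Icc s t)) :
    (∫ r in s..t, D r) ^ 2 ≤ Real.log (t / s) * ∫ r in s..t, r * D r ^ 2 := by
  have hts : (1:ℝ) < t / s := (one_lt_div hs).2 hst
  have hL : 0 < Real.log (t / s) := Real.log_pos hts
  set L := Real.log (t / s) with hLdef
  set J := ∫ r in s..t, D r with hJ
  set K := ∫ r in s..t, r * D r ^ 2 with hK
  have huIcc : Set.uIcc s t = Set.Icc s t := Set.uIcc_of_le hst.le
  have hne : (0:ℝ) ∉ Set.uIcc s t := by
    rw [huIcc]; rintro ⟨h0, _⟩; linarith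
  -- integrability facts
  have hD' : ContinuousOn D (Set.uIcc s t) := by rwa [huIcc]
  have hDi : IntervalIntegrable D volume s t := hD'.intervalIntegrable
  have hrD2 : IntervalIntegrable (fun r => r * D r ^ 2) volume s t := by
    apply ContinuousOn.intervalIntegrable; rw [huIcc]
    exact continuousOn_id.mul (hD.pow 2)
  have hinv : IntervalIntegrable (fun r => (J / L) ^ 2 * (1 / r)) volume s t := by
    apply ContinuousOn.intervalIntegrable; rw [huIcc]
    apply ContinuousOn.mul continuousOn_const
    apply ContinuousOn.div continuousOn_const continuousOn_id
    rintro x hx h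
    simp only [id] at h
    rw [h] at hx; exact absurd hx.1 (by linarith)
  have h1div : ∫ r in s..t, 1 / r = L := integral_one_div hne
  set lam := J / L with hlam
  have key : 0 ≤ ∫ r in s..t, (Real.sqrt r * D r - lam / Real.sqrt r) ^ 2 := by
    apply intervalIntegral.integral_nonneg hst.le
    intro u _; positivity
  have expand : ∫ r in s..t, (Real.sqrt r * D r - lam / Real.sqrt r) ^ 2
      = K - 2 * lam * J + lam ^ 2 * L := by
    have congr1 : ∫ r in s..t, (Real.sqrt r * D r - lam / Real.sqrt r) ^ 2
        = ∫ r in s..t, (r * D r ^ 2 - (2 * lam) * D r + lam ^ 2 * (1 / r)) := by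
      apply intervalIntegral.integral_congr
      intro r hr
      rw [huIcc] at hr
      have hr0 : 0 < r := lt_of_lt_of_le hs hr.1
      have hsq : Real.sqrt r ^ 2 = r := Real.sq_sqrt hr0.le
      have hsne : Real.sqrt r ≠ 0 := by positivity
      show (Real.sqrt r * D r - lam / Real.sqrt r) ^ 2
          = r * D r ^ 2 - 2 * lam * D r + lam ^ 2 * (1 / r)
      have hA : (Real.sqrt r * D r) ^ 2 = r * D r ^ 2 := by rw [mul_pow, hsq]
      have hB : (lam / Real.sqrt r) ^ 2 = lam ^ 2 * (1 / r) := by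
        rw [div_pow, hsq]; ring
      have hAB : Real.sqrt r * D r * (lam / Real.sqrt r) = lam * D r := by
        field_simp
      rw [sub_sq, hA, mul_assoc 2, hAB, hB]
      ring
    rw [congr1]
    rw [intervalIntegral.integral_add (hrD2.sub (hDi.const_mul _)) hinv,
        intervalIntegral.integral_sub hrD2 (hDi.const_mul _),
        intervalIntegral.integral_const_mul, intervalIntegral.integral_const_mul, h1div]
    try ring
  rw [expand] at key
  have : 0 ≤ K - J ^ 2 / L := by
    have : lam ^ 2 * L = J ^ 2 / L := by rw [hlam]; field_simp; try ring
    rw [this] at key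
    have h2 : 2 * lam * J = 2 * (J ^ 2 / L) := by rw [hlam]; field_simp; try ring
    rw [h2] at key; linarith
  have hx : J ^ 2 ≤ K * L := by
    have := mul_le_mul_of_nonneg_right this hL.le
    rw [sub_mul, div_mul_cancel₀ _ hL.ne'] at this
    linarith
  linarith [hx]

lemma my_radial (s t a b : ℝ) (hs : 0 < s) (hst : s < t) (φ : ℂ → ℝ)
    (V : Set ℂ) (hV : IsOpen V) (hsub : {z : ℂ | s ≤ ‖z‖ ∧ ‖z‖ ≤ t} ⊆ V)
    (hφ : ContDiffOn ℝ 1 φ V)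
    (ha : ∀ z : ℂ, ‖z‖ = s → φ z = a) (hb : ∀ z : ℂ, ‖z‖ = t → φ z = b)
    (θ : ℝ) :
    (a - b) ^ 2 / Real.log (t / s)
      ≤ ∫ r in s..t, r * ‖fderiv ℝ φ (Complex.polarCoord.symm (r, θ))‖ ^ 2 := by
  have hL : 0 < Real.log (t / s) := Real.log_pos ((one_lt_div hs).2 hst)
  set u : ℂ := Complex.exp (θ * Complex.I) with hu_def
  have hu : ‖u‖ = 1 := by
    rw [hu_def, Complex.norm_exp_ofReal_mul_I]
  set γ : ℝ → ℂ := fun r => (r : ℂ) * u with hγ_def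
  have hsym : ∀ r : ℝ, Complex.polarCoord.symm (r, θ) = γ r := by
    intro r
    rw [Complex.polarCoord_symm_apply]
    simp only [hγ_def, hu_def, Complex.exp_mul_I, Complex.ofReal_cos, Complex.ofReal_sin]
  have hnorm : ∀ r : ℝ, 0 ≤ r → ‖γ r‖ = r := by
    intro r hr
    rw [hγ_def]
    simp [norm_mul, hu, abs_of_nonneg hr]
  have hmem : ∀ r ∈ Set.Icc s t, γ r ∈ V := by
    intro r hr
    exact hsub ⟨by rw [hnorm r (le_trans hs.le hr.1)]; exact hr.1,
                by rw [hnorm r (le_trans hs.le hr.1)]; exact hr.2⟩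
  set D : ℝ → ℝ := fun r => fderiv ℝ φ (γ r) u with hD_def
  have hγd : ∀ r : ℝ, HasDerivAt γ u r := by
    intro r
    simpa using (Complex.ofRealCLM.hasDerivAt (x := r)).mul_const u
  have hdiff : ∀ r ∈ Set.Icc s t, HasDerivAt (fun r => φ (γ r)) (D r) r := by
    intro r hr
    have hdφ : DifferentiableAt ℝ φ (γ r) :=
      (hφ.contDiffAt (hV.mem_nhds (hmem r hr))).differentiableAt one_ne_zero
    exact hdφ.hasFDerivAt.comp_hasDerivAt r (hγd r)
  have hγc : Continuous γ := by fun_prop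
  have hfc : ContinuousOn (fun z => fderiv ℝ φ z) V :=
    hφ.continuousOn_fderiv_of_isOpen hV le_rfl
  have hFc : ContinuousOn (fun r => fderiv ℝ φ (γ r)) (Set.Icc s t) :=
    hfc.comp hγc.continuousOn hmem
  have hDc : ContinuousOn D (Set.Icc s t) := hFc.clm_apply continuousOn_const
  have huIcc : Set.uIcc s t = Set.Icc s t := Set.uIcc_of_le hst.le
  have hDi : IntervalIntegrable D volume s t := by
    apply ContinuousOn.intervalIntegrable; rwa [huIcc]
  have hftc : ∫ r in s..t, D r = b - a := by
    rw [intervalIntegral.integral_eq_sub_of_hasDerivAt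
      (fun r hr => hdiff r (by rwa [huIcc] at hr)) hDi]
    rw [ha (γ s) (hnorm s hs.le), hb (γ t) (hnorm t (hs.trans hst).le)]
  have hcs := my_cs s t hs hst D hDc
  rw [hftc] at hcs
  have hab : (a - b) ^ 2 = (b - a) ^ 2 := by ring
  have hmono : (∫ r in s..t, r * D r ^ 2)
      ≤ ∫ r in s..t, r * ‖fderiv ℝ φ (γ r)‖ ^ 2 := by
    apply intervalIntegral.integral_mono_on hst.le
    · apply ContinuousOn.intervalIntegrable; rw [huIcc]
      exact continuousOn_id.mul (hDc.pow 2)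
    · apply ContinuousOn.intervalIntegrable; rw [huIcc]
      exact continuousOn_id.mul (hFc.norm.pow 2)
    · intro r hr
      have hle : |D r| ≤ ‖fderiv ℝ φ (γ r)‖ := by
        have := (fderiv ℝ φ (γ r)).le_opNorm u
        rwa [hu, mul_one] at this
      have : D r ^ 2 ≤ ‖fderiv ℝ φ (γ r)‖ ^ 2 := by
        rw [← sq_abs]
        exact pow_le_pow_left₀ (abs_nonneg _) hle 2
      exact mul_le_mul_of_nonneg_left this (le_trans hs.le hr.1)
  calc (a - b) ^ 2 / Real.log (t / s)
      ≤ ∫ r in s..t, r * D r ^ 2 := by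
        rw [div_le_iff₀ hL, hab]
        linarith [hcs]
    _ ≤ _ := by simpa only [hsym] using hmono

/-- Dirichlet principle (capacity lower bound) on an annulus: any `C¹`
function with constant value `a` on the inner circle `‖x‖ = s` and `b` on
the outer circle `‖x‖ = t` has Dirichlet energy at least
`2π(a−b)²/log(t/s)`. -/
theorem stmt_10 (s t a b : ℝ) (hs : 0 < s) (hst : s < t)
    (χ : EuclideanSpace ℝ (Fin 2) → ℝ)
    (U : Set (EuclideanSpace ℝ (Fin 2))) (hU : IsOpen U)
    (hUsub : {x : EuclideanSpace ℝ (Fin 2) | s ≤ ‖x‖ ∧ ‖x‖ ≤ t} ⊆ U)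
    (hχ : ContDiffOn ℝ 1 χ U)
    (hin : ∀ x : EuclideanSpace ℝ (Fin 2), ‖x‖ = s → χ x = a)
    (hout : ∀ x : EuclideanSpace ℝ (Fin 2), ‖x‖ = t → χ x = b) :
    2 * π * (a - b) ^ 2 / Real.log (t / s)
      ≤ ∫ x in {x : EuclideanSpace ℝ (Fin 2) | s < ‖x‖ ∧ ‖x‖ < t},
          ‖gradient χ x‖ ^ 2 := by
  have hL : 0 < Real.log (t / s) := Real.log_pos ((one_lt_div hs).2 hst)
  set e : ℂ ≃ₗᵢ[ℝ] EuclideanSpace ℝ (Fin 2) := Complex.orthonormalBasisOneI.repr with he_def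
  set φ : ℂ → ℝ := fun z => χ (e z) with hφ_def
  set V : Set ℂ := ⇑e ⁻¹' U with hV_def
  have hVopen : IsOpen V := hU.preimage e.continuous
  have hVsub : {z : ℂ | s ≤ ‖z‖ ∧ ‖z‖ ≤ t} ⊆ V := by
    intro z hz
    exact hUsub ⟨by rw [e.norm_map]; exact hz.1, by rw [e.norm_map]; exact hz.2⟩
  have heCD : ContDiff ℝ 1 (⇑e) :=
    e.toContinuousLinearEquiv.toContinuousLinearMap.contDiff
  have hφC : ContDiffOn ℝ 1 φ V := hχ.comp heCD.contDiffOn (fun z hz => hz)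
  have ha : ∀ z : ℂ, ‖z‖ = s → φ z = a := fun z hz => hin (e z) (by rw [e.norm_map]; exact hz)
  have hb : ∀ z : ℂ, ‖z‖ = t → φ z = b := fun z hz => hout (e z) (by rw [e.norm_map]; exact hz)
  -- convenient sets
  set SC : Set ℂ := {z : ℂ | s < ‖z‖ ∧ ‖z‖ < t} with hSC_def
  have hSCmeas : MeasurableSet SC := by
    have : IsOpen SC := by
      have : SC = (fun z : ℂ => ‖z‖) ⁻¹' (Set.Ioo s t) := by
        ext z; simp [hSC_def, Set.mem_Ioo]
      rw [this]
      exact isOpen_Ioo.preimage continuous_norm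
    exact this.measurableSet
  set P : Set (ℝ × ℝ) := Set.Ioo s t ×ˢ Set.Ioo (-π) π with hP_def
  set G : ℝ × ℝ → ℝ := fun p => p.1 * ‖fderiv ℝ φ (Complex.polarCoord.symm p)‖ ^ 2 with hG_def
  -- Step 1: transfer to ℂ
  have hmp : MeasurePreserving (⇑e) volume volume :=
    Complex.orthonormalBasisOneI.measurePreserving_repr
  have hemb : MeasurableEmbedding (⇑e) := e.toHomeomorph.measurableEmbedding
  have hpre : ⇑e ⁻¹' {x : EuclideanSpace ℝ (Fin 2) | s < ‖x‖ ∧ ‖x‖ < t} = SC := by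
    ext z; simp [hSC_def, e.norm_map]
  have step1 : ∫ x in {x : EuclideanSpace ℝ (Fin 2) | s < ‖x‖ ∧ ‖x‖ < t}, ‖gradient χ x‖ ^ 2
      = ∫ z in SC, ‖fderiv ℝ φ z‖ ^ 2 := by
    rw [← hmp.setIntegral_preimage_emb hemb (fun x => ‖gradient χ x‖ ^ 2) _, hpre]
    apply setIntegral_congr_fun hSCmeas
    intro z hz
    have hzV : z ∈ V := hVsub ⟨hz.1.le, hz.2.le⟩
    have hχd : DifferentiableAt ℝ χ (e z) :=
      (hχ.contDiffAt (hU.mem_nhds hzV)).differentiableAt one_ne_zero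
    have hchain : fderiv ℝ φ z
        = (fderiv ℝ χ (e z)).comp (e.toLinearIsometry.toContinuousLinearMap) := by
      have he' : HasFDerivAt (⇑e) (e.toLinearIsometry.toContinuousLinearMap) z := by
        exact (e.toLinearIsometry.toContinuousLinearMap).hasFDerivAt
      exact (hχd.hasFDerivAt.comp z he').fderiv
    have hgrad : ‖gradient χ (e z)‖ = ‖fderiv ℝ χ (e z)‖ := by
      show ‖(InnerProductSpace.toDual ℝ _).symm (fderiv ℝ χ (e z))‖ = _
      exact LinearIsometryEquiv.norm_map _ _
    simp only []
    rw [hgrad, hchain]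
    exact congrArg (· ^ 2) (ContinuousLinearMap.opNorm_comp_linearIsometryEquiv (fderiv ℝ χ (e z)) e).symm
  -- Step 2: polar coordinates
  have step2 : ∫ z in SC, ‖fderiv ℝ φ z‖ ^ 2 = ∫ p in P, G p := by
    have hind : ∫ z in SC, ‖fderiv ℝ φ z‖ ^ 2
        = ∫ z, Set.indicator SC (fun z => ‖fderiv ℝ φ z‖ ^ 2) z := by
      rw [MeasureTheory.integral_indicator hSCmeas]
    rw [hind, ← Complex.integral_comp_polarCoord_symm]
    have hcongr : ∀ p ∈ polarCoord.target,
        p.1 • Set.indicator SC (fun z => ‖fderiv ℝ φ z‖ ^ 2) (Complex.polarCoord.symm p)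
        = Set.indicator P G p := by
      rintro ⟨r, θ⟩ hp
      rw [polarCoord_target] at hp
      obtain ⟨hr, hθ⟩ := hp
      have habs : ‖Complex.polarCoord.symm (r, θ)‖ = r := by
        rw [Complex.norm_polarCoord_symm]
        exact abs_of_pos hr
      by_cases h : s < r ∧ r < t
      · rw [Set.indicator_of_mem, Set.indicator_of_mem]
        · simp [hG_def, smul_eq_mul]
        · exact Set.mem_prod.2 ⟨⟨h.1, h.2⟩, hθ⟩
        · rw [Set.mem_setOf_eq, habs]; exact h
      · rw [Set.indicator_of_notMem, Set.indicator_of_notMem, smul_zero]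
        · intro hc
          exact h ⟨(Set.mem_prod.1 hc).1.1, (Set.mem_prod.1 hc).1.2⟩
        · rw [Set.mem_setOf_eq, habs]; exact h
    rw [setIntegral_congr_fun (polarCoord.open_target.measurableSet) hcongr]
    rw [setIntegral_indicator (measurableSet_Ioo.prod measurableSet_Ioo)]
    congr 1
    rw [polarCoord_target]
    rw [Set.inter_eq_self_of_subset_right]
    intro p hp
    exact ⟨lt_trans hs (Set.mem_prod.1 hp).1.1, (Set.mem_prod.1 hp).2⟩
  -- integrability of G on P
  have hsymc : Continuous (fun p : ℝ × ℝ => Complex.polarCoord.symm p) := by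
    have : (fun p : ℝ × ℝ => (Complex.polarCoord.symm p : ℂ))
        = fun p : ℝ × ℝ => (p.1 : ℂ) * (Real.cos p.2 + Real.sin p.2 * Complex.I) := by
      funext p; exact Complex.polarCoord_symm_apply p
    rw [this]
    fun_prop
  have hfc : ContinuousOn (fun z => fderiv ℝ φ z) V :=
    hφC.continuousOn_fderiv_of_isOpen hVopen le_rfl
  have hKmaps : Set.MapsTo (fun p : ℝ × ℝ => Complex.polarCoord.symm p)
      (Set.Icc s t ×ˢ Set.Icc (-π) π) V := by
    rintro ⟨r, θ⟩ hp
    apply hVsub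
    have habs : ‖(Complex.polarCoord.symm (r, θ) : ℂ)‖ = r := by
      rw [Complex.norm_polarCoord_symm]
      exact abs_of_pos (lt_of_lt_of_le hs hp.1.1)
    exact ⟨by rw [habs]; exact hp.1.1, by rw [habs]; exact hp.1.2⟩
  have hGc : ContinuousOn G (Set.Icc s t ×ˢ Set.Icc (-π) π) := by
    apply ContinuousOn.mul continuousOn_fst
    exact ((hfc.comp hsymc.continuousOn hKmaps).norm.pow 2)
  have hGint : IntegrableOn G P := by
    apply IntegrableOn.mono_set (hGc.integrableOn_compact (isCompact_Icc.prod isCompact_Icc))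
    exact Set.prod_mono Set.Ioo_subset_Icc_self Set.Ioo_subset_Icc_self
  -- Step 3: Fubini
  have hGint' : Integrable G ((volume.restrict (Set.Ioo s t)).prod
      (volume.restrict (Set.Ioo (-π) π))) := by
    rw [Measure.prod_restrict]
    rw [← Measure.volume_eq_prod]
    exact hGint
  have step3 : ∫ p in P, G p
      = ∫ θ in Set.Ioo (-π) π, ∫ r in Set.Ioo s t, G (r, θ) := by
    have h1 : ∫ p in P, G p
        = ∫ r in Set.Ioo s t, ∫ θ in Set.Ioo (-π) π, G (r, θ) := by
      rw [hP_def, Measure.volume_eq_prod]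
      exact setIntegral_prod G (by rwa [← Measure.volume_eq_prod])
    rw [h1]
    exact integral_integral_swap hGint'
  -- Step 5: per-θ estimate and conclusion
  set I : ℝ → ℝ := fun θ => ∫ r in Set.Ioo s t, G (r, θ) with hI_def
  have hIint : IntegrableOn I (Set.Ioo (-π) π) := hGint'.integral_prod_right
  have hperθ : ∀ θ ∈ Set.Ioo (-π) π, (a - b) ^ 2 / Real.log (t / s) ≤ I θ := by
    intro θ hθ
    have := my_radial s t a b hs hst φ V hVopen hVsub hφC ha hb θ
    rwa [intervalIntegral.integral_of_le hst.le, integral_Ioc_eq_integral_Ioo] at this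
  have hconst : ∫ _θ in Set.Ioo (-π) π, ((a - b) ^ 2 / Real.log (t / s))
      = 2 * π * (a - b) ^ 2 / Real.log (t / s) := by
    rw [setIntegral_const, measureReal_def, Real.volume_Ioo]
    rw [ENNReal.toReal_ofReal (by linarith [pi_pos] : (0:ℝ) ≤ π - (-π))]
    rw [smul_eq_mul]
    ring
  calc 2 * π * (a - b) ^ 2 / Real.log (t / s)
      = ∫ _θ in Set.Ioo (-π) π, ((a - b) ^ 2 / Real.log (t / s)) := hconst.symm
    _ ≤ ∫ θ in Set.Ioo (-π) π, I θ := by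
        apply setIntegral_mono_on (integrableOn_const (by
          rw [Real.volume_Ioo]; exact ENNReal.ofReal_ne_top)) hIint measurableSet_Ioo hperθ
    _ = ∫ p in P, G p := step3.symm
    _ = _ := by rw [step1, step2]
end

section
/- Let α > −1. For ε ∈ (0,1) set α_ε := ε^{−1/(2(1+α))}/(−log ε) and r_ε := α_ε·ε^{1/(2(1+α))}. Then lim_{ε → 0⁺} ∫_{B_{r_ε}(0)} ‖x‖^{2α}·ε·(‖x‖^{2(1+α)} + ε)^{−2} dx = π/(1+α), where B_{r_ε}(0) ⊂ ℝ² is the open ball of radius r_ε centered at the origin and the integral is with respect to Lebesgue measure on ℝ². -/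
open Real MeasureTheory Filter Set Topology

private lemma ftc_piece (α ε r : ℝ) (hα : -1 < α) (hε : 0 < ε) (hr : 0 < r) :
    ∫ y in (0:ℝ)..r, y * (y ^ (2*α) * ε * (y ^ (2*(1+α)) + ε) ^ (-2:ℝ))
      = (1/(2*(1+α))) * (r ^ (2*(1+α)) / (r ^ (2*(1+α)) + ε)) := by
  set c : ℝ := 2*(1+α) with hcdef
  have hc : 0 < c := by rw [hcdef]; linarith
  have hden : ∀ y : ℝ, 0 ≤ y → 0 < y ^ c + ε := fun y hy =>
    add_pos_of_nonneg_of_pos (Real.rpow_nonneg hy c) hε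
  -- the integrand equals ε * y^(c-1) * (y^c+ε)^(-2) on (0,r)
  have key : ∀ y ∈ Ioo (0:ℝ) r,
      HasDerivAt (fun y : ℝ => -(ε/c) * (y ^ c + ε)⁻¹)
        (y * (y ^ (2*α) * ε * (y ^ c + ε) ^ (-2:ℝ))) y := by
    intro y hy
    have hy0 : 0 < y := hy.1
    have h1 : HasDerivAt (fun y : ℝ => y ^ c + ε) (c * y ^ (c-1)) y :=
      (Real.hasDerivAt_rpow_const (Or.inl hy0.ne')).add_const ε
    have h2 := (h1.inv (hden y hy0.le).ne').const_mul (-(ε/c))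
    refine h2.congr_deriv ?_
    symm
    have hne := (hden y hy0.le).ne'
    have e1 : (y ^ c + ε) ^ (-2:ℝ) = ((y ^ c + ε)^2)⁻¹ := by
      rw [Real.rpow_neg (hden y hy0.le).le, ← Real.rpow_natCast (y ^ c + ε) 2]
      norm_num
    have e2 : y * y ^ (2*α) = y ^ (c-1) := by
      rw [show c - 1 = 2*α + 1 by rw [hcdef]; ring, Real.rpow_add_one hy0.ne', mul_comm]
    rw [e1]
    field_simp
    rw [← e2]
  have hcont : ContinuousOn (fun y : ℝ => -(ε/c) * (y ^ c + ε)⁻¹) (Icc 0 r) := by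
    apply ContinuousOn.mul continuousOn_const
    apply ContinuousOn.inv₀
    · exact ((Real.continuous_rpow_const hc.le).continuousOn).add continuousOn_const
    · exact fun y hy => (hden y hy.1).ne'
  have hint : IntervalIntegrable
      (fun y : ℝ => y * (y ^ (2*α) * ε * (y ^ c + ε) ^ (-2:ℝ))) volume 0 r := by
    have hg : IntervalIntegrable (fun y : ℝ => ε⁻¹ * y ^ (2*α+1)) volume 0 r :=
      (intervalIntegral.intervalIntegrable_rpow' (by linarith)).const_mul ε⁻¹
    apply hg.mono_fun'
    · apply Measurable.aestronglyMeasurable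
      fun_prop
    · rw [Set.uIoc_of_le hr.le]
      filter_upwards [ae_restrict_mem measurableSet_Ioc] with y hy
      have hy0 : 0 < y := hy.1
      have hpos : 0 < y * (y ^ (2*α) * ε * (y ^ c + ε) ^ (-2:ℝ)) := by
        have := Real.rpow_pos_of_pos (hden y hy0.le) (-2:ℝ)
        positivity
      rw [Real.norm_eq_abs, abs_of_pos hpos]
      have e2 : y * y ^ (2*α) = y ^ (2*α+1) := by
        rw [Real.rpow_add_one hy0.ne', mul_comm]
      have hb : (y ^ c + ε) ^ (-2:ℝ) ≤ ε ^ (-2:ℝ) :=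
        Real.rpow_le_rpow_of_nonpos hε (le_add_of_nonneg_left (Real.rpow_nonneg hy0.le c))
          (by norm_num)
      calc y * (y ^ (2*α) * ε * (y ^ c + ε) ^ (-2:ℝ))
          = (y * y ^ (2*α)) * (ε * (y ^ c + ε) ^ (-2:ℝ)) := by ring
        _ ≤ (y ^ (2*α+1)) * (ε * ε ^ (-2:ℝ)) := by
            rw [e2]
            apply mul_le_mul_of_nonneg_left _ (Real.rpow_nonneg hy0.le _)
            exact mul_le_mul_of_nonneg_left hb hε.le
        _ = ε⁻¹ * y ^ (2*α+1) := by
            rw [show (-2:ℝ) = (-1) + (-1) by norm_num, Real.rpow_add hε,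
              Real.rpow_neg_one]
            field_simp
  rw [intervalIntegral.integral_eq_sub_of_hasDerivAt_of_le hr.le hcont key hint]
  rw [Real.zero_rpow hc.ne']
  have h1 : (0:ℝ) + ε = ε := by ring
  rw [h1]
  have hrc : 0 < r ^ c + ε := hden r hr.le
  field_simp
  ring

private lemma ball_integral (α ε r : ℝ) (hα : -1 < α) (hε : 0 < ε) (hr : 0 < r) :
    ∫ x in Metric.ball (0 : EuclideanSpace ℝ (Fin 2)) r,
        ‖x‖ ^ (2 * α) * ε * (‖x‖ ^ (2 * (1 + α)) + ε) ^ (-2 : ℝ)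
      = π / (1 + α) * (r ^ (2*(1+α)) / (r ^ (2*(1+α)) + ε)) := by
  set h : ℝ → ℝ := fun y => y ^ (2*α) * ε * (y ^ (2*(1+α)) + ε) ^ (-2:ℝ) with hh
  set g : ℝ → ℝ := Set.indicator (Set.Iio r) h with hg
  have stepA : ∫ x in Metric.ball (0 : EuclideanSpace ℝ (Fin 2)) r,
      ‖x‖ ^ (2 * α) * ε * (‖x‖ ^ (2 * (1 + α)) + ε) ^ (-2 : ℝ)
      = ∫ x : EuclideanSpace ℝ (Fin 2), g ‖x‖ := by
    rw [← integral_indicator measurableSet_ball]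
    congr 1
    funext x
    simp only [hg, hh, Set.indicator, mem_ball_zero_iff, Set.mem_Iio]
  rw [stepA, integral_fun_norm_addHaar volume g]
  have hdim : Module.finrank ℝ (EuclideanSpace ℝ (Fin 2)) = 2 := finrank_euclideanSpace_fin
  rw [hdim]
  have hvol : (volume (Metric.ball (0 : EuclideanSpace ℝ (Fin 2)) 1)).toReal = π := by
    rw [EuclideanSpace.volume_ball]
    simp only [Fintype.card_fin]
    rw [show ((2:ℕ):ℝ)/2 + 1 = 2 by norm_num, Real.Gamma_two]
    rw [ENNReal.ofReal_one, one_pow, one_mul]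
    rw [Real.sq_sqrt Real.pi_pos.le]
    simp [Real.pi_pos.le]
  rw [measureReal_def, hvol]
  have stepC : ∫ y in Ioi (0:ℝ), y ^ (2-1) • g y
      = ∫ y in (0:ℝ)..r, y * h y := by
    have e1 : ∀ y : ℝ, y ^ (2-1) • g y = Set.indicator (Set.Iio r) (fun y => y * h y) y := by
      intro y
      simp only [pow_one, smul_eq_mul, hg, Set.indicator]
      split <;> simp
    simp_rw [e1]
    rw [integral_indicator measurableSet_Iio, Measure.restrict_restrict measurableSet_Iio,
      Set.Iio_inter_Ioi, intervalIntegral.integral_of_le hr.le, integral_Ioc_eq_integral_Ioo]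
  rw [stepC, ftc_piece α ε r hα hε hr]
  rw [nsmul_eq_mul, smul_eq_mul]
  have h1 : (1:ℝ) + α ≠ 0 := by linarith
  field_simp
  ring

/-- Concentration of the weighted mass of the test function `Φ_ε`:
with `α_ε = ε^{−1/(2(1+α))}/(−log ε)` and `r_ε = α_ε ε^{1/(2(1+α))}`,
`∫_{B_{r_ε}(0)} ‖x‖^{2α} ε (‖x‖^{2(1+α)} + ε)^{−2} dx → π/(1+α)`
as `ε → 0⁺`. -/
theorem stmt_14 (α : ℝ) (hα : -1 < α) :
    Tendsto (fun ε : ℝ =>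
        ∫ x in Metric.ball (0 : EuclideanSpace ℝ (Fin 2))
            ((ε ^ (-(1 : ℝ) / (2 * (1 + α))) / (-Real.log ε))
              * ε ^ ((1 : ℝ) / (2 * (1 + α)))),
          ‖x‖ ^ (2 * α) * ε * (‖x‖ ^ (2 * (1 + α)) + ε) ^ (-2 : ℝ))
      (nhdsWithin 0 (Set.Ioi 0)) (nhds (π / (1 + α))) := by
  set c : ℝ := 2*(1+α) with hcdef
  have hc : 0 < c := by rw [hcdef]; linarith
  -- ε * (-log ε)^c → 0
  have h0 : Tendsto (fun ε : ℝ => ε * (-Real.log ε) ^ c) (𝓝[>] 0) (𝓝 0) := by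
    have h1 : Tendsto (fun ε : ℝ => ε ^ (1/c) * (-Real.log ε)) (𝓝[>] 0) (𝓝 0) := by
      have := (tendsto_log_mul_rpow_nhdsGT_zero (by positivity : 0 < 1/c)).neg
      rw [neg_zero] at this
      exact this.congr fun ε => by ring
    have h2 : Tendsto (fun u : ℝ => u ^ c) (𝓝 0) (𝓝 0) := by
      have := Real.continuousAt_rpow_const 0 c (Or.inr hc.le)
      have h3 : (0:ℝ) ^ c = 0 := Real.zero_rpow hc.ne'
      simpa [ContinuousAt, h3] using this
    have h4 := h2.comp h1
    apply h4.congr'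
    filter_upwards [Ioo_mem_nhdsGT_of_mem (by norm_num : (0:ℝ) ∈ Ico 0 1)] with ε hε
    have hε0 : 0 < ε := hε.1
    have hL : 0 ≤ -Real.log ε := by
      have := Real.log_neg hε0 hε.2; linarith
    simp only [Function.comp]
    rw [Real.mul_rpow (Real.rpow_nonneg hε0.le _) hL, ← Real.rpow_mul hε0.le,
      one_div, inv_mul_cancel₀ hc.ne', Real.rpow_one]
  -- the limit function
  have hT : Tendsto (fun ε : ℝ => π / (1 + α) * (1 + ε * (-Real.log ε) ^ c)⁻¹)
      (𝓝[>] 0) (𝓝 (π / (1 + α))) := by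
    have := ((tendsto_const_nhds.add h0).inv₀ (by norm_num : (1:ℝ) + 0 ≠ 0)).const_mul
      (π / (1 + α))
    simpa using this
  apply hT.congr'
  filter_upwards [Ioo_mem_nhdsGT_of_mem (by norm_num : (0:ℝ) ∈ Ico 0 1)] with ε hε
  have hε0 : 0 < ε := hε.1
  have hL : 0 < -Real.log ε := by
    have := Real.log_neg hε0 hε.2; linarith
  set L : ℝ := -Real.log ε with hLdef
  have hrad : ε ^ (-(1 : ℝ) / (2 * (1 + α))) / (-Real.log ε) * ε ^ ((1 : ℝ) / (2 * (1 + α)))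
      = L⁻¹ := by
    rw [div_mul_eq_mul_div, ← Real.rpow_add hε0,
      show -(1:ℝ) / (2 * (1 + α)) + 1 / (2 * (1 + α)) = 0 by ring,
      Real.rpow_zero, one_div]
  have hLc : 0 < L ^ c := Real.rpow_pos_of_pos hL c
  rw [hrad, ball_integral α ε L⁻¹ hα hε0 (inv_pos.mpr hL)]
  have hinv : (L⁻¹) ^ c = (L ^ c)⁻¹ := Real.inv_rpow hL.le c
  rw [hinv]
  congr 1
  rw [eq_div_iff (by positivity : (0:ℝ) < (L ^ c)⁻¹ + ε).ne',
    inv_mul_eq_div, div_eq_iff (by positivity : (0:ℝ) < 1 + ε * L ^ c).ne']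
  field_simp
end

section
/- Let α > −1. For ε ∈ (0,1) set r_ε := 1/(−log ε) and define Φ_ε : ℝ² → ℝ by Φ_ε(x) = −2·log(‖x‖^{2(1+α)} + ε) + log ε. Then lim_{ε → 0⁺} [ (1/4)·∫_{B_{r_ε}(0)} ‖∇Φ_ε(x)‖² dx + 4π(1+α)·log ε + 8π(1+α)²·log(−log ε) ] = −4π(1+α), where B_{r_ε}(0) ⊂ ℝ² is the open ball of radius r_ε centered at the origin, ∇ the Euclidean gradient, and the integral is with respect to Lebesgue measure. -/
open Real MeasureTheory Filter Set InnerProductSpace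

local notation "E" => EuclideanSpace ℝ (Fin 2)

lemma grad_eq (α ε : ℝ) (hε : 0 < ε) (x : E) (hx : x ≠ 0) :
    HasGradientAt (fun y : E =>
        -2 * Real.log (‖y‖ ^ (2 * (1 + α)) + ε) + Real.log ε)
      ((-4 * (1 + α) * ‖x‖ ^ (2 * α) / (‖x‖ ^ (2 * (1 + α)) + ε)) • x) x := by
  have hxn : (0:ℝ) < ‖x‖ := norm_pos_iff.mpr hx
  set s : ℝ := ‖x‖ ^ (2:ℕ) with hs
  have hspos : 0 < s := by positivity
  -- derivative of outer function ψ t = -2 log (t^(1+α)+ε) + log ε at s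
  have hrpow : HasDerivAt (fun t : ℝ => t ^ (1+α)) ((1+α) * s ^ α) s := by
    have := Real.hasDerivAt_rpow_const (x := s) (p := 1+α) (Or.inl hspos.ne')
    simpa [add_sub_cancel_right] using this
  have hlogarg : 0 < s ^ (1+α) + ε := by positivity
  have hψ : HasDerivAt (fun t : ℝ => -2 * Real.log (t ^ (1+α) + ε) + Real.log ε)
      (-2 * ((1+α) * s ^ α / (s ^ (1+α) + ε))) s := by
    have := ((hrpow.add_const ε).log hlogarg.ne').const_mul (-2:ℝ)
    simpa [mul_div_assoc] using this.add_const (Real.log ε)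
  have hnsq : HasFDerivAt (fun y : E => ‖y‖ ^ (2:ℕ)) (2 • (innerSL ℝ x)) x :=
    (hasStrictFDerivAt_norm_sq x).hasFDerivAt
  have hcomp := hψ.comp_hasFDerivAt x hnsq
  have heq : (fun y : E => -2 * Real.log ((‖y‖ ^ (2:ℕ) : ℝ) ^ (1+α) + ε) + Real.log ε)
      = (fun y : E => -2 * Real.log (‖y‖ ^ (2 * (1 + α)) + ε) + Real.log ε) := by
    funext y
    rw [← Real.rpow_natCast ‖y‖ 2, ← Real.rpow_mul (norm_nonneg y)]
    norm_num
  simp only [Function.comp_def] at hcomp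
  rw [heq] at hcomp
  rw [hasGradientAt_iff_hasFDerivAt]
  convert hcomp using 1
  · rfl
  ext y
  simp only [toDual_apply_apply, ContinuousLinearMap.smul_apply, ContinuousLinearMap.coe_smul',
    Pi.smul_apply, innerSL_apply_apply, inner_smul_left, map_ofNat, RCLike.ofNat_mul_re,
    smul_eq_mul]
  have h1 : s ^ (1+α) = ‖x‖ ^ (2 * (1 + α)) := by
    rw [hs, ← Real.rpow_natCast ‖x‖ 2, ← Real.rpow_mul (norm_nonneg x)]
    norm_num
  have h2 : s ^ α = ‖x‖ ^ (2 * α) := by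
    rw [hs, ← Real.rpow_natCast ‖x‖ 2, ← Real.rpow_mul (norm_nonneg x)]
    norm_num
  rw [h1, h2]
  simp only [starRingEnd_apply, star_trivial]
  ring

lemma oneDim (α ε R : ℝ) (hα : -1 < α) (hε : 0 < ε) (hR : 0 < R) :
    ∫ r in Set.Ioo (0:ℝ) R,
        16 * (1 + α) ^ 2 * r ^ (4 * α + 3) / (r ^ (2 * (1 + α)) + ε) ^ 2
      = 8 * (1 + α) * (Real.log (R ^ (2 * (1 + α)) + ε)
          + ε / (R ^ (2 * (1 + α)) + ε) - Real.log ε - 1) := by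
  set p : ℝ := 2 * (1 + α) with hp
  have hppos : 0 < p := by simp only [hp]; linarith
  have h1α : 0 < 1 + α := by linarith
  set F : ℝ → ℝ := fun r => 8 * (1 + α) * (Real.log (r ^ p + ε) + ε / (r ^ p + ε)) with hF
  set φ : ℝ → ℝ := fun r => 16 * (1 + α) ^ 2 * r ^ (4 * α + 3) / (r ^ p + ε) ^ 2 with hφ
  have hupos : ∀ r : ℝ, 0 ≤ r → 0 < r ^ p + ε := fun r hr => by
    have := Real.rpow_nonneg hr p; linarith
  -- continuity of F on Icc 0 R
  have hcu : Continuous fun r : ℝ => r ^ p + ε :=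
    (Real.continuous_rpow_const hppos.le).add continuous_const
  have hcF : ContinuousOn F (Icc 0 R) := by
    apply ContinuousOn.mul continuousOn_const
    apply ContinuousOn.add
    · exact ContinuousOn.log hcu.continuousOn
        (fun r hr => (hupos r hr.1).ne')
    · exact ContinuousOn.div continuousOn_const hcu.continuousOn
        (fun r hr => (hupos r hr.1).ne')
  -- derivative
  have hderiv : ∀ r ∈ Ioo (0:ℝ) R, HasDerivAt F (φ r) r := by
    intro r hr
    have hrpos : (0:ℝ) < r := hr.1
    have hu : HasDerivAt (fun r : ℝ => r ^ p + ε) (p * r ^ (p - 1)) r :=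
      (Real.hasDerivAt_rpow_const (Or.inl hrpos.ne')).add_const ε
    have hv : 0 < r ^ p + ε := hupos r hrpos.le
    have hlog := hu.log hv.ne'
    have hinv := (hu.inv hv.ne').const_mul ε
    have := ((hlog.add (by simpa [div_eq_mul_inv] using hinv)).const_mul
      (8 * (1 + α)))
    convert this using 1
    · rfl
    · rfl
    · rfl
    have hr1 : r ^ (4 * α + 3) = r ^ (p - 1) * r ^ p := by
      rw [← Real.rpow_add hrpos, hp]; ring_nf
    rw [hφ]
    simp only
    rw [hr1]
    field_simp
    ring
  -- interval integrability of φ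
  have hint : IntervalIntegrable φ volume 0 R := by
    have h1 : IntervalIntegrable (fun r : ℝ => r ^ (4 * α + 3)) volume 0 R :=
      intervalIntegral.intervalIntegrable_rpow' (by linarith)
    have h2 : ContinuousOn (fun r : ℝ => 16 * (1 + α) ^ 2 / (r ^ p + ε) ^ 2)
        (Set.uIcc 0 R) := by
      rw [Set.uIcc_of_le hR.le]
      exact ContinuousOn.div continuousOn_const (hcu.pow 2).continuousOn
        (fun r hr => pow_ne_zero 2 (hupos r hr.1).ne')
    have heq : φ = fun r => r ^ (4 * α + 3) * (16 * (1 + α) ^ 2 / (r ^ p + ε) ^ 2) := by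
      funext r; rw [hφ]; ring
    rw [heq]
    exact h1.mul_continuousOn h2
  -- FTC
  have hFTC := intervalIntegral.integral_eq_sub_of_hasDeriv_right_of_le hR.le hcF
    (fun x hx => (hderiv x hx).hasDerivWithinAt) hint
  rw [intervalIntegral.integral_of_le hR.le, integral_Ioc_eq_integral_Ioo] at hFTC
  rw [hFTC, hF]
  simp only
  rw [Real.zero_rpow hppos.ne']
  rw [zero_add, div_self hε.ne']
  ring

lemma ballInt (α ε R : ℝ) (hα : -1 < α) (hε : 0 < ε) (hR : 0 < R) :
    ∫ x in Metric.ball (0 : E) R,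
        ‖gradient (fun y : E =>
            -2 * Real.log (‖y‖ ^ (2 * (1 + α)) + ε) + Real.log ε) x‖ ^ 2
      = 16 * π * (1 + α) * (Real.log (R ^ (2 * (1 + α)) + ε)
          + ε / (R ^ (2 * (1 + α)) + ε) - Real.log ε - 1) := by
  set p : ℝ := 2 * (1 + α) with hp
  have hppos : 0 < p := by simp only [hp]; linarith
  set g : ℝ → ℝ := fun r => 16 * (1 + α) ^ 2 * r ^ (4 * α + 2) / (r ^ p + ε) ^ 2 with hg
  -- pointwise formula for nonzero x
  have hpt : ∀ x : E, x ≠ 0 →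
      ‖gradient (fun y : E =>
          -2 * Real.log (‖y‖ ^ (2 * (1 + α)) + ε) + Real.log ε) x‖ ^ 2 = g ‖x‖ := by
    intro x hx
    have hxn : (0:ℝ) < ‖x‖ := norm_pos_iff.mpr hx
    rw [(grad_eq α ε hε x hx).gradient]
    rw [norm_smul, mul_pow, Real.norm_eq_abs, sq_abs]
    rw [hg]
    simp only
    rw [div_pow, mul_pow, mul_pow]
    have e1 : (‖x‖ ^ (2 * α)) ^ 2 = ‖x‖ ^ (4 * α) := by
      rw [← Real.rpow_natCast (‖x‖ ^ (2*α)) 2, ← Real.rpow_mul (norm_nonneg x)]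
      norm_num; ring_nf
    have e2 : ‖x‖ ^ (4 * α) * ‖x‖ ^ (2:ℕ) = ‖x‖ ^ (4 * α + 2) := by
      rw [← Real.rpow_natCast ‖x‖ 2, ← Real.rpow_add hxn]
      norm_num
    rw [e1]
    rw [div_mul_eq_mul_div, mul_assoc, e2]
    norm_num
    rw [hp]
  -- replace integrand a.e.
  have h0 : (volume : Measure E) {0} = 0 := measure_singleton 0
  have hae : ∀ᵐ x : E, x ∈ Metric.ball (0:E) R →
      ‖gradient (fun y : E =>
          -2 * Real.log (‖y‖ ^ (2 * (1 + α)) + ε) + Real.log ε) x‖ ^ 2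
        = (Set.Iio R).indicator g ‖x‖ := by
    have : ∀ᵐ x : E, x ≠ 0 := by
      rw [ae_iff]; simpa using h0
    filter_upwards [this] with x hx hmem
    rw [hpt x hx, Set.indicator_of_mem (by simpa [mem_ball_zero_iff] using hmem)]
  rw [setIntegral_congr_ae measurableSet_ball hae]
  -- to indicator over whole space
  have hrw : ∀ x : E, (Metric.ball (0:E) R).indicator
      (fun x : E => (Set.Iio R).indicator g ‖x‖) x = (Set.Iio R).indicator g ‖x‖ := by
    intro x
    by_cases hx : x ∈ Metric.ball (0:E) R
    · rw [Set.indicator_of_mem hx]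
    · rw [Set.indicator_of_notMem hx, Set.indicator_of_notMem]
      simpa [mem_ball_zero_iff] using hx
  rw [← integral_indicator measurableSet_ball]
  rw [integral_congr_ae (Filter.Eventually.of_forall hrw)]
  -- polar coordinates
  rw [integral_fun_norm_addHaar (volume : Measure E) ((Set.Iio R).indicator g)]
  have hdim : Module.finrank ℝ E = 2 := by simp
  rw [hdim]
  have hvol : (volume (Metric.ball (0:E) 1)).toReal = π := by
    rw [EuclideanSpace.volume_ball]
    simp [Real.Gamma_two]
    rw [ENNReal.toReal_ofReal]
    · rw [Real.sq_sqrt pi_nonneg]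
      norm_num [Real.Gamma_two]
    · positivity
  rw [measureReal_def, hvol]
  -- inner integral
  have hinner : ∫ y in Set.Ioi (0:ℝ), y ^ (2 - 1) • (Set.Iio R).indicator g y
      = ∫ r in Set.Ioo (0:ℝ) R,
          16 * (1 + α) ^ 2 * r ^ (4 * α + 3) / (r ^ p + ε) ^ 2 := by
    have : ∀ y : ℝ, y ^ (2-1) • (Set.Iio R).indicator g y
        = (Set.Iio R).indicator (fun y => y * g y) y := by
      intro y
      by_cases hy : y ∈ Set.Iio R
      · rw [Set.indicator_of_mem hy, Set.indicator_of_mem hy]; simp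
      · rw [Set.indicator_of_notMem hy, Set.indicator_of_notMem hy]; simp
    rw [integral_congr_ae (Filter.Eventually.of_forall fun y => this y)]
    rw [setIntegral_indicator measurableSet_Iio, Set.Ioi_inter_Iio]
    apply setIntegral_congr_fun measurableSet_Ioo
    intro r hr
    have hrpos : (0:ℝ) < r := hr.1
    simp only [hg]
    have e : r ^ (4*α+3) = r ^ (4*α+2) * r := by
      rw [show (4*α+3) = (4*α+2)+1 by ring, Real.rpow_add hrpos, Real.rpow_one]
    rw [e]; ring
  rw [hinner, oneDim α ε R hα hε hR]
  simp only [nsmul_eq_mul, smul_eq_mul]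
  ring

/-- Asymptotic expansion of the local Dirichlet energy of the bubbling test
function `Φ_ε(x) = −2 log(‖x‖^{2(1+α)} + ε) + log ε` on the ball of radius
`r_ε = 1/(−log ε)`:
`(1/4)∫_{B_{r_ε}}‖∇Φ_ε‖² + 4π(1+α) log ε + 8π(1+α)² log(−log ε)
  → −4π(1+α)` as `ε → 0⁺`. -/
theorem stmt_15 (α : ℝ) (hα : -1 < α) :
    Tendsto (fun ε : ℝ =>
        (1 / 4) * (∫ x in Metric.ball (0 : EuclideanSpace ℝ (Fin 2))
              (1 / (-Real.log ε)),
            ‖gradient (fun y : EuclideanSpace ℝ (Fin 2) =>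
                -2 * Real.log (‖y‖ ^ (2 * (1 + α)) + ε) + Real.log ε) x‖ ^ 2)
          + 4 * π * (1 + α) * Real.log ε
          + 8 * π * (1 + α) ^ 2 * Real.log (-Real.log ε))
      (nhdsWithin 0 (Set.Ioi 0)) (nhds (-(4 * π * (1 + α)))) := by
  set p : ℝ := 2 * (1 + α) with hp
  have h1α : (0:ℝ) < 1 + α := by linarith
  have hppos : 0 < p := by simp only [hp]; linarith
  set φ : ℝ → ℝ := fun d => 4 * π * (1 + α) * (Real.log (1 + d) + d / (1 + d) - 1) with hφdef
  -- δ tends to 0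
  have hδ : Tendsto (fun ε : ℝ => ε * (-Real.log ε) ^ p) (nhdsWithin 0 (Set.Ioi 0)) (nhds 0) := by
    have h1 : Tendsto (fun x : ℝ => x ^ p * Real.exp (-1 * x)) atTop (nhds 0) :=
      tendsto_rpow_mul_exp_neg_mul_atTop_nhds_zero p 1 one_pos
    have h2 : Tendsto (fun ε : ℝ => -Real.log ε) (nhdsWithin 0 (Set.Ioi 0)) atTop :=
      tendsto_neg_atBot_atTop.comp Real.tendsto_log_nhdsGT_zero
    apply (h1.comp h2).congr'
    filter_upwards [self_mem_nhdsWithin] with ε hε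
    simp only [Function.comp_apply, neg_one_mul, neg_neg, Real.exp_log hε]
    ring
  -- φ continuous at 0
  have hφc : ContinuousAt φ 0 := by
    apply ContinuousAt.mul continuousAt_const
    apply ContinuousAt.sub ?_ continuousAt_const
    apply ContinuousAt.add
    · exact (Real.continuousAt_log (by norm_num)).comp
        (continuousAt_const.add continuousAt_id)
    · exact ContinuousAt.div continuousAt_id
        (continuousAt_const.add continuousAt_id) (by norm_num)
  have hφ0 : φ 0 = -(4 * π * (1 + α)) := by
    simp [hφdef]
  have hmain : Tendsto (fun ε : ℝ => φ (ε * (-Real.log ε) ^ p))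
      (nhdsWithin 0 (Set.Ioi 0)) (nhds (-(4 * π * (1 + α)))) := by
    rw [← hφ0]
    exact hφc.tendsto.comp hδ
  apply hmain.congr'
  filter_upwards [Ioo_mem_nhdsGT_of_mem (by norm_num : (0:ℝ) ∈ Set.Ico (0:ℝ) 1)]
    with ε hε
  have hε0 : 0 < ε := hε.1
  have hL : 0 < -Real.log ε := by
    have := Real.log_neg hε0 hε.2; linarith
  set L : ℝ := -Real.log ε with hLdef
  have hR : 0 < 1 / L := by positivity
  rw [ballInt α ε (1/L) hα hε0 hR]
  set δ : ℝ := ε * L ^ p with hδdef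
  have hLp : 0 < L ^ p := Real.rpow_pos_of_pos hL p
  have hδpos : 0 < δ := by positivity
  set U : ℝ := (1/L) ^ p with hUdef
  have hUpos : 0 < U := Real.rpow_pos_of_pos hR p
  have hUL : U * L ^ p = 1 := by
    rw [hUdef, one_div, ← Real.mul_rpow (by positivity) hL.le, inv_mul_cancel₀ hL.ne',
      Real.one_rpow]
  have hUδ : U * δ = ε := by
    rw [hδdef]
    calc U * (ε * L ^ p) = ε * (U * L ^ p) := by ring
    _ = ε := by rw [hUL, mul_one]
  have hUε : U + ε = U * (1 + δ) := by
    rw [mul_add, mul_one, hUδ]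
  have hlogU : Real.log U = -p * Real.log L := by
    rw [hUdef, Real.log_rpow hR, one_div, Real.log_inv]; ring
  have hlogsum : Real.log (U + ε) = Real.log U + Real.log (1 + δ) := by
    rw [hUε, Real.log_mul hUpos.ne' (by positivity)]
  have hfrac : ε / (U + ε) = δ / (1 + δ) := by
    rw [hUε, ← hUδ, mul_div_mul_left _ _ hUpos.ne']
  rw [hlogsum, hfrac, hlogU, hφdef]
  simp only
  rw [hp]
  ring
end
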